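/- Suppose f ∈ L¹((0,∞) × ℝ). Then for any δ > 0: lim_{t→∞} sup_{|y| ≥ (4+δ)t} | ∫₀ᵗ (H_{2(t−s)} * W_{4(t−s)} * f(s,·))(y) ds | = 0. -/
import Mathlib


open MeasureTheory
open ENNReal

noncomputable section

/-- The heat kernel `H_t(y) = (4πt)^{-1/2} e^{-y²/(4t)}`. -/
def Hker (t y : ℝ) : ℝ := (Real.sqrt (4 * Real.pi * t))⁻¹ * Real.exp (-y ^ 2 / (4 * t))

/-- `W_t = (1/2)·1_{[-t,t]}`. -/
def Wfun (t : ℝ) : ℝ → ℝ := Set.indicator (Set.Icc (-t) t) fun _ => (1 : ℝ) / 2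

/-- `∫₀ᵗ (H_{2(t−s)} * W_{4(t−s)} * f(s,·))(y) ds`. -/
def heatWaveInt (f : ℝ → ℝ → ℝ) (t y : ℝ) : ℝ :=
  ∫ s in (0:ℝ)..t, ∫ z : ℝ, ∫ w : ℝ,
    Hker (2 * (t - s)) (y - z) * Wfun (4 * (t - s)) (z - w) * f s w

lemma Hker_nonneg (t y : ℝ) : 0 ≤ Hker t y :=
  mul_nonneg (inv_nonneg.2 (Real.sqrt_nonneg _)) (Real.exp_pos _).le

lemma Wfun_nonneg (t x : ℝ) : 0 ≤ Wfun t x := by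
  unfold Wfun; exact Set.indicator_nonneg (fun _ _ => by norm_num) x

lemma Wfun_le (t x : ℝ) : Wfun t x ≤ 1 / 2 := by
  unfold Wfun
  by_cases h : x ∈ Set.Icc (-t) t
  · rw [Set.indicator_of_mem h]
  · rw [Set.indicator_of_notMem h]; norm_num

lemma Wfun_eq_zero {t x : ℝ} (h : ¬ |x| ≤ t) : Wfun t x = 0 := by
  unfold Wfun
  rw [Set.indicator_of_notMem]
  rw [Set.mem_Icc, ← abs_le]
  exact h

lemma Hker_zero (v : ℝ) : Hker 0 v = 0 := by
  simp [Hker]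

lemma Hker_integrable {c : ℝ} (hc : 0 < c) (y : ℝ) :
    Integrable (fun z => Hker c (y - z)) := by
  have hb : 0 < (4 * c)⁻¹ := by positivity
  have h := ((integrable_exp_neg_mul_sq hb).comp_sub_left y).const_mul
    ((Real.sqrt (4 * Real.pi * c))⁻¹)
  refine h.congr (Filter.Eventually.of_forall fun z => ?_)
  unfold Hker
  dsimp only
  rw [neg_div, div_eq_inv_mul, neg_mul]

lemma Hker_integral {c : ℝ} (hc : 0 < c) (y : ℝ) :
    ∫ z, Hker c (y - z) = 1 := by
  have hb : 0 < (4 * c)⁻¹ := by positivity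
  unfold Hker
  have h1 : ∀ z : ℝ, -(y - z) ^ 2 / (4 * c) = -((4 * c)⁻¹ * (y - z) ^ 2) := by
    intro z; field_simp
  simp_rw [h1]
  rw [integral_const_mul]
  simp_rw [← neg_mul]
  rw [integral_sub_left_eq_self (fun x => Real.exp (-(4 * c)⁻¹ * x ^ 2)) volume y,
    integral_gaussian]
  have h2 : Real.pi / (4 * c)⁻¹ = 4 * Real.pi * c := by field_simp
  rw [h2, inv_mul_cancel₀]
  exact (Real.sqrt_pos.mpr (by positivity)).ne'

lemma lintegral_Hker {c : ℝ} (hc : 0 < c) (y : ℝ) :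
    ∫⁻ z, ENNReal.ofReal (Hker c (y - z)) = 1 := by
  rw [← ofReal_integral_eq_lintegral_ofReal (Hker_integrable hc y)
    (Filter.Eventually.of_forall fun z => Hker_nonneg _ _), Hker_integral hc y,
    ENNReal.ofReal_one]

lemma Hker_le {c R : ℝ} (hc : 0 < c) (hR : 0 ≤ R) {v : ℝ} (h : R ≤ |v|) :
    Hker c v ≤ (Real.sqrt (4 * Real.pi * c))⁻¹ * Real.exp (-R ^ 2 / (4 * c)) := by
  unfold Hker
  apply mul_le_mul_of_nonneg_left ?_ (inv_nonneg.2 (Real.sqrt_nonneg _))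
  apply Real.exp_le_exp.mpr
  rw [neg_div, neg_div, neg_le_neg_iff]
  have hRv : R ^ 2 ≤ v ^ 2 := by
    calc R ^ 2 ≤ |v| ^ 2 := by gcongr
      _ = v ^ 2 := sq_abs v
  exact div_le_div_of_nonneg_right hRv (by positivity)

lemma lint_z_half {τ : ℝ} (hτ : 0 < τ) (y w : ℝ) :
    ∫⁻ z, ENNReal.ofReal (Hker (2 * τ) (y - z) * Wfun (4 * τ) (z - w)) ≤
      ENNReal.ofReal (1 / 2) := by
  have hb : ∀ z : ℝ, ENNReal.ofReal (Hker (2 * τ) (y - z) * Wfun (4 * τ) (z - w)) ≤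
      ENNReal.ofReal (Hker (2 * τ) (y - z)) * ENNReal.ofReal (1 / 2) := by
    intro z
    rw [← ENNReal.ofReal_mul (Hker_nonneg _ _)]
    exact ENNReal.ofReal_le_ofReal
      (mul_le_mul_of_nonneg_left (Wfun_le _ _) (Hker_nonneg _ _))
  calc ∫⁻ z, ENNReal.ofReal (Hker (2 * τ) (y - z) * Wfun (4 * τ) (z - w))
      ≤ ∫⁻ z, ENNReal.ofReal (Hker (2 * τ) (y - z)) * ENNReal.ofReal (1 / 2) :=
        lintegral_mono hb
    _ = (∫⁻ z, ENNReal.ofReal (Hker (2 * τ) (y - z))) * ENNReal.ofReal (1 / 2) :=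
        lintegral_mul_const' _ _ ENNReal.ofReal_ne_top
    _ = ENNReal.ofReal (1 / 2) := by
        rw [lintegral_Hker (by positivity) y, one_mul]

lemma lint_z_far {τ t R : ℝ} (hτ : 0 < τ) (hτt : τ ≤ t) (hR : 0 ≤ R) {y w : ℝ}
    (hfar : ∀ z, |z - w| ≤ 4 * τ → R ≤ |y - z|) :
    ∫⁻ z, ENNReal.ofReal (Hker (2 * τ) (y - z) * Wfun (4 * τ) (z - w)) ≤
      ENNReal.ofReal (Real.sqrt t * Real.exp (-R ^ 2 / (8 * t))) := by
  set C : ℝ := 1 / 2 * ((Real.sqrt (4 * Real.pi * (2 * τ)))⁻¹ * Real.exp (-R ^ 2 / (8 * τ)))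
    with hC
  have hC0 : 0 ≤ C := by positivity
  have hpt : ∀ z, ENNReal.ofReal (Hker (2 * τ) (y - z) * Wfun (4 * τ) (z - w)) ≤
      (Set.Icc (w - 4 * τ) (w + 4 * τ)).indicator (fun _ => ENNReal.ofReal C) z := by
    intro z
    by_cases hz : z ∈ Set.Icc (w - 4 * τ) (w + 4 * τ)
    · rw [Set.indicator_of_mem hz]
      apply ENNReal.ofReal_le_ofReal
      have hzw : |z - w| ≤ 4 * τ := by
        rw [abs_le]; constructor <;> [linarith [hz.1]; linarith [hz.2]]
      have h8 : (4 : ℝ) * (2 * τ) = 8 * τ := by ring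
      have hH : Hker (2 * τ) (y - z) ≤
          (Real.sqrt (4 * Real.pi * (2 * τ)))⁻¹ * Real.exp (-R ^ 2 / (8 * τ)) := by
        have := Hker_le (c := 2 * τ) (by positivity) hR (hfar z hzw)
        rwa [h8] at this
      calc Hker (2 * τ) (y - z) * Wfun (4 * τ) (z - w)
          ≤ ((Real.sqrt (4 * Real.pi * (2 * τ)))⁻¹ * Real.exp (-R ^ 2 / (8 * τ))) * (1 / 2) :=
            mul_le_mul hH (Wfun_le _ _) (Wfun_nonneg _ _) (by positivity)
        _ = C := by rw [hC]; ring
    · rw [Set.indicator_of_notMem hz]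
      have hw0 : Wfun (4 * τ) (z - w) = 0 := by
        apply Wfun_eq_zero
        intro hcon
        apply hz
        rw [abs_le] at hcon
        constructor <;> [linarith [hcon.1]; linarith [hcon.2]]
      simp [hw0]
  calc ∫⁻ z, ENNReal.ofReal (Hker (2 * τ) (y - z) * Wfun (4 * τ) (z - w))
      ≤ ∫⁻ z, (Set.Icc (w - 4 * τ) (w + 4 * τ)).indicator (fun _ => ENNReal.ofReal C) z :=
        lintegral_mono hpt
    _ = ENNReal.ofReal C * volume (Set.Icc (w - 4 * τ) (w + 4 * τ)) := by
        rw [lintegral_indicator measurableSet_Icc, setLIntegral_const]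
    _ = ENNReal.ofReal (C * (8 * τ)) := by
        rw [Real.volume_Icc, ← ENNReal.ofReal_mul hC0]
        congr 1
        ring_nf
    _ ≤ ENNReal.ofReal (Real.sqrt t * Real.exp (-R ^ 2 / (8 * t))) := by
        apply ENNReal.ofReal_le_ofReal
        have hsq : Real.sqrt (16 * τ) ≤ Real.sqrt (4 * Real.pi * (2 * τ)) := by
          apply Real.sqrt_le_sqrt
          nlinarith [Real.two_le_pi]
        have hsq16 : Real.sqrt (16 * τ) = 4 * Real.sqrt τ := by
          rw [show (16 : ℝ) * τ = 4 ^ 2 * τ by norm_num, Real.sqrt_mul (by positivity),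
            Real.sqrt_sq (by norm_num : (0:ℝ) ≤ 4)]
        have hsqτpos : 0 < Real.sqrt τ := Real.sqrt_pos.mpr hτ
        have h1 : C * (8 * τ) = 4 * τ * (Real.sqrt (4 * Real.pi * (2 * τ)))⁻¹ *
            Real.exp (-R ^ 2 / (8 * τ)) := by rw [hC]; ring
        have h2 : 4 * τ * (Real.sqrt (4 * Real.pi * (2 * τ)))⁻¹ ≤ Real.sqrt τ := by
          have hpos16 : 0 < Real.sqrt (16 * τ) := Real.sqrt_pos.mpr (by positivity)
          have ha : (Real.sqrt (4 * Real.pi * (2 * τ)))⁻¹ ≤ (Real.sqrt (16 * τ))⁻¹ :=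
            inv_anti₀ hpos16 hsq
          calc 4 * τ * (Real.sqrt (4 * Real.pi * (2 * τ)))⁻¹
              ≤ 4 * τ * (Real.sqrt (16 * τ))⁻¹ :=
                mul_le_mul_of_nonneg_left ha (by positivity)
            _ = τ * (Real.sqrt τ)⁻¹ := by
                rw [hsq16, mul_inv]; ring
            _ = Real.sqrt τ := by rw [← div_eq_mul_inv, Real.div_sqrt]
        have h3 : Real.exp (-R ^ 2 / (8 * τ)) ≤ Real.exp (-R ^ 2 / (8 * t)) := by
          apply Real.exp_le_exp.mpr
          rw [neg_div, neg_div, neg_le_neg_iff]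
          apply div_le_div_of_nonneg_left (by positivity) (by positivity) (by linarith)
        have h4 : Real.sqrt τ ≤ Real.sqrt t := Real.sqrt_le_sqrt hτt
        rw [h1]
        calc 4 * τ * (Real.sqrt (4 * Real.pi * (2 * τ)))⁻¹ * Real.exp (-R ^ 2 / (8 * τ))
            ≤ Real.sqrt τ * Real.exp (-R ^ 2 / (8 * t)) :=
              mul_le_mul h2 h3 (by positivity) (by positivity)
          _ ≤ Real.sqrt t * Real.exp (-R ^ 2 / (8 * t)) := by gcongr
lemma measurable_Hker (c y : ℝ) : Measurable fun z : ℝ => Hker c (y - z) := by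
  unfold Hker; fun_prop

lemma measurable_Wfun (c : ℝ) : Measurable (Wfun c) :=
  Measurable.indicator measurable_const measurableSet_Icc

lemma ofReal_abs_integral_le {α : Type*} [MeasurableSpace α] (h : α → ℝ) (μ : Measure α) :
    ENNReal.ofReal |∫ x, h x ∂μ| ≤ ∫⁻ x, ENNReal.ofReal |h x| ∂μ := by
  simp_rw [← Real.enorm_eq_ofReal_abs]
  exact enorm_integral_le_lintegral_enorm h

lemma key (g : ℝ → ℝ → ℝ) (hg : Measurable fun p : ℝ × ℝ => g p.1 p.2)
    (hfin : ∫⁻ p, ENNReal.ofReal |g p.1 p.2|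
      ∂((volume.restrict (Set.Ioi 0)).prod volume) ≠ ⊤)
    {δ ε : ℝ} (hδ : 0 < δ) (hε : 0 < ε) :
    ∃ T : ℝ, 1 ≤ T ∧ ∀ t : ℝ, T ≤ t → ∀ y : ℝ, (4 + δ) * t ≤ |y| →
      |heatWaveInt g t y| < ε := by
  set μ0 : Measure ℝ := volume.restrict (Set.Ioi 0) with hμ0
  set dens : ℝ × ℝ → ℝ≥0∞ := fun p => ENNReal.ofReal |g p.1 p.2| with hdens_def
  have hdens : Measurable dens := hg.abs.ennreal_ofReal
  set M : ℝ≥0∞ := ∫⁻ p, dens p ∂(μ0.prod volume) with hM_def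
  have hM : M ≠ ⊤ := hfin
  have hMit : ∫⁻ s, (∫⁻ w, ENNReal.ofReal |g s w|) ∂μ0 = M :=
    (lintegral_prod dens hdens.aemeasurable).symm
  -- tail
  set ν : Measure (ℝ × ℝ) := (μ0.prod volume).withDensity dens with hν_def
  have hνuniv : ν Set.univ = M := by
    rw [hν_def, withDensity_apply dens MeasurableSet.univ, Measure.restrict_univ]
  set A : ℕ → Set (ℝ × ℝ) := fun n => {p | (n : ℝ) ≤ |p.2|} with hA_def
  have hAm : ∀ n, MeasurableSet (A n) := fun n =>
    measurableSet_le measurable_const measurable_snd.abs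
  have hAnt : Antitone A := by
    intro n m hnm p hp
    simp only [hA_def, Set.mem_setOf_eq] at hp ⊢
    exact le_trans (Nat.cast_le.mpr hnm) hp
  have hInter : ⋂ n, A n = ∅ := by
    apply Set.eq_empty_iff_forall_notMem.mpr
    intro p hp
    obtain ⟨n, hn⟩ := exists_nat_gt |p.2|
    exact absurd (Set.mem_iInter.mp hp n) (not_le.mpr hn)
  have hν0 : ν (A 0) ≠ ⊤ := by
    refine ne_top_of_le_ne_top ?_ (measure_mono (Set.subset_univ _))
    rw [hνuniv]; exact hM
  have htend : Filter.Tendsto (ν ∘ A) Filter.atTop (nhds 0) := by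
    have h := tendsto_measure_iInter_atTop (μ := ν) (fun n => (hAm n).nullMeasurableSet)
      hAnt ⟨0, hν0⟩
    rwa [hInter, measure_empty] at h
  obtain ⟨n₀, hn₀⟩ : ∃ n₀ : ℕ, ν (A n₀) < ENNReal.ofReal (ε / 4) := by
    have h := htend.eventually_lt_const
      (show (0 : ℝ≥0∞) < ENNReal.ofReal (ε / 4) from ENNReal.ofReal_pos.mpr (by linarith))
    exact h.exists
  -- decay of the Gaussian bound
  have hdecay : Filter.Tendsto (fun t : ℝ => Real.sqrt t * Real.exp (-(δ ^ 2 / 32) * t))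
      Filter.atTop (nhds 0) := by
    have h := tendsto_rpow_mul_exp_neg_mul_atTop_nhds_zero (1 / 2) (δ ^ 2 / 32)
      (by positivity)
    exact h.congr fun x => by rw [← Real.sqrt_eq_rpow]
  have hMr : (0 : ℝ) ≤ M.toReal := ENNReal.toReal_nonneg
  set c₀ : ℝ := (ε / 4) / (M.toReal + 1) with hc₀_def
  have hc₀ : 0 < c₀ := by positivity
  obtain ⟨T₂, hT₂⟩ := Filter.eventually_atTop.mp (hdecay.eventually_lt_const hc₀)
  refine ⟨max 1 (max T₂ (2 * n₀ / δ)), le_max_left _ _, ?_⟩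
  intro t ht y hy
  have ht1 : (1 : ℝ) ≤ t := le_trans (le_max_left _ _) ht
  have ht0 : (0 : ℝ) < t := lt_of_lt_of_le zero_lt_one ht1
  have htT₂ : T₂ ≤ t := le_trans (le_trans (le_max_left _ _) (le_max_right _ _)) ht
  have htr : (n₀ : ℝ) ≤ δ * t / 2 := by
    have h1 : 2 * n₀ / δ ≤ t :=
      le_trans (le_trans (le_max_right _ _) (le_max_right _ _)) ht
    rw [div_le_iff₀ hδ] at h1
    linarith
  set S : Set ℝ := {w : ℝ | δ * t / 2 ≤ |w|} with hS_def
  have hS : MeasurableSet S := measurableSet_le measurable_const measurable_abs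
  set Av : ℝ := Real.sqrt t * Real.exp (-(δ ^ 2 / 32) * t) with hAv_def
  have hAv0 : 0 ≤ Av := by positivity
  have hAvc : Av < c₀ := hT₂ t htT₂
  -- tail bound
  have hTailS : (∫⁻ s, (∫⁻ w in S, ENNReal.ofReal |g s w|) ∂μ0) ≤ ENNReal.ofReal (ε / 4) := by
    have e1 : (∫⁻ s, (∫⁻ w in S, ENNReal.ofReal |g s w|) ∂μ0) =
        ∫⁻ p, dens p ∂(μ0.prod (volume.restrict S)) :=
      (lintegral_prod dens hdens.aemeasurable).symm
    have e2 : μ0.prod (volume.restrict S) = (μ0.prod volume).restrict (Set.univ ×ˢ S) := by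
      conv_lhs => rw [← Measure.restrict_univ (μ := μ0)]
      exact Measure.prod_restrict _ _
    have e3 : (∫⁻ p in Set.univ ×ˢ S, dens p ∂(μ0.prod volume)) = ν (Set.univ ×ˢ S) :=
      (withDensity_apply dens (MeasurableSet.univ.prod hS)).symm
    have e4 : ν (Set.univ ×ˢ S) ≤ ν (A n₀) := by
      apply measure_mono
      rintro p ⟨-, hp2⟩
      exact le_trans htr hp2
    rw [e1, e2, e3]
    exact le_trans e4 hn₀.le
  -- main pointwise estimate
  set m : ℝ → ℝ → ℝ≥0∞ := fun s w => ENNReal.ofReal |g s w| with hm_def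
  have hm : ∀ s, Measurable (m s) := fun s =>
    ((hg.comp ((measurable_const.prodMk measurable_id) : Measurable fun w : ℝ => (s, w))).abs).ennreal_ofReal
  set φ : ℝ → ℝ≥0∞ := fun s =>
    ENNReal.ofReal Av * (∫⁻ w, m s w) + ENNReal.ofReal (1 / 2) * ∫⁻ w in S, m s w
    with hφ_def
  have stepa : ∀ s ∈ Set.Ioo (0 : ℝ) t,
      ENNReal.ofReal |∫ z : ℝ, ∫ w : ℝ,
        Hker (2 * (t - s)) (y - z) * Wfun (4 * (t - s)) (z - w) * g s w| ≤ φ s := by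
    intro s hs
    set τ : ℝ := t - s with hτ_def
    have hτ : 0 < τ := by simp only [hτ_def]; linarith [hs.2]
    have hτt : τ ≤ t := by simp only [hτ_def]; linarith [hs.1]
    set k : ℝ → ℝ → ℝ≥0∞ := fun z w =>
      ENNReal.ofReal (Hker (2 * τ) (y - z) * Wfun (4 * τ) (z - w)) with hk_def
    have hkmeas : Measurable fun p : ℝ × ℝ => k p.1 p.2 := by
      apply Measurable.ennreal_ofReal
      exact ((measurable_Hker (2 * τ) y).comp measurable_fst).mul
        ((measurable_Wfun (4 * τ)).comp (measurable_fst.sub measurable_snd))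
    have step1 : ENNReal.ofReal |∫ z : ℝ, ∫ w : ℝ,
        Hker (2 * τ) (y - z) * Wfun (4 * τ) (z - w) * g s w| ≤
        ∫⁻ z, ∫⁻ w, k z w * m s w := by
      refine le_trans (ofReal_abs_integral_le _ _) (lintegral_mono fun z => ?_)
      refine le_trans (ofReal_abs_integral_le _ _) (le_of_eq (lintegral_congr fun w => ?_))
      rw [hk_def, hm_def]
      dsimp only
      rw [abs_mul, abs_of_nonneg (mul_nonneg (Hker_nonneg _ _) (Wfun_nonneg _ _)),
        ENNReal.ofReal_mul (mul_nonneg (Hker_nonneg _ _) (Wfun_nonneg _ _))]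
    have step2 : (∫⁻ z, ∫⁻ w, k z w * m s w) = ∫⁻ w, (∫⁻ z, k z w) * m s w := by
      rw [lintegral_lintegral_swap]
      · refine lintegral_congr fun w => ?_
        exact lintegral_mul_const' _ _ ENNReal.ofReal_ne_top
      · exact (hkmeas.mul ((hm s).comp measurable_snd)).aemeasurable
    have hkb : ∀ w, (∫⁻ z, k z w) ≤
        ENNReal.ofReal Av + ENNReal.ofReal (1 / 2) * S.indicator (fun _ => 1) w := by
      intro w
      by_cases hw : w ∈ S
      · rw [Set.indicator_of_mem hw, mul_one]
        exact le_trans (lint_z_half hτ y w) le_add_self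
      · rw [Set.indicator_of_notMem hw, mul_zero, add_zero]
        have hw' : |w| < δ * t / 2 := not_le.mp hw
        have hfar : ∀ z, |z - w| ≤ 4 * τ → δ * t / 2 ≤ |y - z| := by
          intro z hz
          have h1 : |y| - |z| ≤ |y - z| := abs_sub_abs_le_abs_sub y z
          have h2 : |z| ≤ |w| + |z - w| := by
            calc |z| = |w + (z - w)| := by ring_nf
              _ ≤ |w| + |z - w| := abs_add_le _ _
          have h3 : 4 * τ ≤ 4 * t := by linarith
          linarith
        refine le_trans (lint_z_far hτ hτt (by positivity) hfar) (le_of_eq ?_)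
        congr 1
        rw [hAv_def]
        congr 1
        field_simp
        ring
    have step3 : (∫⁻ w, (∫⁻ z, k z w) * m s w) ≤ φ s := by
      have hψ : ∀ w, (∫⁻ z, k z w) * m s w ≤
          ENNReal.ofReal Av * m s w +
            ENNReal.ofReal (1 / 2) * S.indicator (m s) w := by
        intro w
        refine le_trans (mul_le_mul_left (hkb w) (m s w)) (le_of_eq ?_)
        by_cases hw : w ∈ S
        · rw [Set.indicator_of_mem hw, Set.indicator_of_mem hw, mul_one, add_mul]
        · simp [Set.indicator_of_notMem hw]
      refine le_trans (lintegral_mono hψ) (le_of_eq ?_)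
      rw [lintegral_add_left ((hm s).const_mul _),
        lintegral_const_mul' _ _ ENNReal.ofReal_ne_top,
        lintegral_const_mul' _ _ ENNReal.ofReal_ne_top,
        lintegral_indicator hS]
    calc ENNReal.ofReal |∫ z : ℝ, ∫ w : ℝ,
        Hker (2 * (t - s)) (y - z) * Wfun (4 * (t - s)) (z - w) * g s w|
        ≤ ∫⁻ z, ∫⁻ w, k z w * m s w := step1
      _ = ∫⁻ w, (∫⁻ z, k z w) * m s w := step2
      _ ≤ φ s := step3
  -- assembling
  have h0t : (0 : ℝ) ≤ t := ht0.le
  rw [heatWaveInt, intervalIntegral.integral_of_le h0t]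
  have hb1 : |∫ s in Set.Ioc (0:ℝ) t, ∫ z : ℝ, ∫ w : ℝ,
      Hker (2 * (t - s)) (y - z) * Wfun (4 * (t - s)) (z - w) * g s w| ≤
      (∫⁻ s in Set.Ioc (0:ℝ) t, ENNReal.ofReal |∫ z : ℝ, ∫ w : ℝ,
        Hker (2 * (t - s)) (y - z) * Wfun (4 * (t - s)) (z - w) * g s w|).toReal := by
    have h := norm_integral_le_lintegral_norm (μ := volume.restrict (Set.Ioc (0:ℝ) t))
      (fun s => ∫ z : ℝ, ∫ w : ℝ,
        Hker (2 * (t - s)) (y - z) * Wfun (4 * (t - s)) (z - w) * g s w)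
    simpa [Real.norm_eq_abs] using h
  have hrestr : volume.restrict (Set.Ioc (0:ℝ) t) = volume.restrict (Set.Ioo (0:ℝ) t) :=
    (Measure.restrict_congr_set Ioo_ae_eq_Ioc).symm
  have hL : (∫⁻ s in Set.Ioc (0:ℝ) t, ENNReal.ofReal |∫ z : ℝ, ∫ w : ℝ,
      Hker (2 * (t - s)) (y - z) * Wfun (4 * (t - s)) (z - w) * g s w|) ≤
      ENNReal.ofReal (ε / 2) := by
    rw [hrestr]
    have hφint : (∫⁻ s in Set.Ioo (0:ℝ) t, φ s) ≤
        ENNReal.ofReal Av * M + ENNReal.ofReal (1 / 2) * ENNReal.ofReal (ε / 4) := by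
      have hmeas1 : Measurable fun s => ∫⁻ w, m s w :=
        hdens.lintegral_prod_right'
      rw [hφ_def]
      simp only
      rw [lintegral_add_left (hmeas1.const_mul _),
        lintegral_const_mul' _ _ ENNReal.ofReal_ne_top,
        lintegral_const_mul' _ _ ENNReal.ofReal_ne_top]
      have hsub : volume.restrict (Set.Ioo (0:ℝ) t) ≤ μ0 :=
        Measure.restrict_mono Set.Ioo_subset_Ioi_self le_rfl
      have hm1 : (∫⁻ s in Set.Ioo (0:ℝ) t, ∫⁻ w, m s w) ≤ M := by
        rw [← hMit]; exact lintegral_mono' hsub le_rfl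
      have hm2 : (∫⁻ s in Set.Ioo (0:ℝ) t, ∫⁻ w in S, m s w) ≤ ENNReal.ofReal (ε / 4) :=
        le_trans (lintegral_mono' hsub le_rfl) hTailS
      exact add_le_add (mul_le_mul_right hm1 _) (mul_le_mul_right hm2 _)
    have hmono : (∫⁻ s in Set.Ioo (0:ℝ) t, ENNReal.ofReal |∫ z : ℝ, ∫ w : ℝ,
        Hker (2 * (t - s)) (y - z) * Wfun (4 * (t - s)) (z - w) * g s w|) ≤
        ∫⁻ s in Set.Ioo (0:ℝ) t, φ s := by
      refine lintegral_mono_ae ((ae_restrict_iff' measurableSet_Ioo).2 ?_)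
      exact Filter.Eventually.of_forall stepa
    refine le_trans (le_trans hmono hφint) ?_
    have hterm1 : ENNReal.ofReal Av * M ≤ ENNReal.ofReal (ε / 4) := by
      have hMle : M ≤ ENNReal.ofReal (M.toReal + 1) :=
        calc M = ENNReal.ofReal M.toReal := (ENNReal.ofReal_toReal hM).symm
          _ ≤ ENNReal.ofReal (M.toReal + 1) := ENNReal.ofReal_le_ofReal (by linarith)
      calc ENNReal.ofReal Av * M ≤ ENNReal.ofReal Av * ENNReal.ofReal (M.toReal + 1) :=
            mul_le_mul_right hMle _
        _ = ENNReal.ofReal (Av * (M.toReal + 1)) := (ENNReal.ofReal_mul hAv0).symm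
        _ ≤ ENNReal.ofReal (ε / 4) := by
            apply ENNReal.ofReal_le_ofReal
            have : Av * (M.toReal + 1) ≤ c₀ * (M.toReal + 1) := by nlinarith
            rw [hc₀_def] at this
            rw [div_mul_cancel₀ (ε / 4) (by linarith : M.toReal + 1 ≠ 0)] at this
            exact this
    have hterm2 : ENNReal.ofReal (1 / 2) * ENNReal.ofReal (ε / 4) ≤
        ENNReal.ofReal (ε / 4) := by
      calc ENNReal.ofReal (1 / 2) * ENNReal.ofReal (ε / 4) ≤
            1 * ENNReal.ofReal (ε / 4) :=
          mul_le_mul_left (ENNReal.ofReal_le_one.mpr (by norm_num)) _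
        _ = ENNReal.ofReal (ε / 4) := one_mul _
    calc ENNReal.ofReal Av * M + ENNReal.ofReal (1 / 2) * ENNReal.ofReal (ε / 4) ≤
        ENNReal.ofReal (ε / 4) + ENNReal.ofReal (ε / 4) := add_le_add hterm1 hterm2
      _ = ENNReal.ofReal (ε / 2) := by
          rw [← ENNReal.ofReal_add (by linarith) (by linarith)]
          congr 1
          ring
  have := ENNReal.toReal_le_of_le_ofReal (by linarith : (0:ℝ) ≤ ε / 2) hL
  calc |∫ s in Set.Ioc (0:ℝ) t, ∫ z : ℝ, ∫ w : ℝ,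
      Hker (2 * (t - s)) (y - z) * Wfun (4 * (t - s)) (z - w) * g s w| ≤ _ := hb1
    _ ≤ ε / 2 := this
    _ < ε := by linarith

/-- Outside the cone `|y| ≥ (4+δ)t`, the iterated heat-wave convolution of an integrable
function converges uniformly to zero. -/
theorem heatWaveInt_limit_outside (f : ℝ → ℝ → ℝ)
    (hf : IntegrableOn (fun p : ℝ × ℝ => f p.1 p.2) (Set.Ioi 0 ×ˢ Set.univ)) :
    ∀ δ : ℝ, 0 < δ → ∀ ε : ℝ, 0 < ε → ∃ T : ℝ, ∀ t : ℝ, T ≤ t →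
      ∀ y : ℝ, (4 + δ) * t ≤ |y| →
        |heatWaveInt f t y| < ε := by
  intro δ hδ ε hε
  have hμ : (volume : Measure (ℝ × ℝ)).restrict (Set.Ioi 0 ×ˢ Set.univ) =
      (volume.restrict (Set.Ioi 0)).prod volume := by
    rw [Measure.volume_eq_prod, ← Measure.prod_restrict, Measure.restrict_univ]
  have hfI : Integrable (fun p : ℝ × ℝ => f p.1 p.2)
      ((volume.restrict (Set.Ioi 0)).prod volume) := by
    rw [← hμ]; exact hf
  set g₀ : ℝ × ℝ → ℝ := hfI.1.mk _ with hg₀_def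
  have hg₀sm : StronglyMeasurable g₀ := hfI.1.stronglyMeasurable_mk
  set g : ℝ → ℝ → ℝ := fun s w => g₀ (s, w) with hg_def
  have hgm : Measurable fun p : ℝ × ℝ => g p.1 p.2 :=
    hg₀sm.measurable.comp (measurable_fst.prodMk measurable_snd)
  have hae : (fun p : ℝ × ℝ => f p.1 p.2) =ᵐ[(volume.restrict (Set.Ioi 0)).prod volume]
      fun p => g p.1 p.2 := by
    refine hfI.1.ae_eq_mk.trans (Filter.Eventually.of_forall fun p => ?_)
    rw [hg_def]
  have hgI : Integrable (fun p : ℝ × ℝ => g p.1 p.2)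
      ((volume.restrict (Set.Ioi 0)).prod volume) := hfI.congr hae
  have hfin : ∫⁻ p, ENNReal.ofReal |g p.1 p.2|
      ∂((volume.restrict (Set.Ioi 0)).prod volume) ≠ ⊤ := by
    have h := hgI.2
    rw [HasFiniteIntegral] at h
    rw [show (fun p : ℝ × ℝ => ENNReal.ofReal |g p.1 p.2|) =
        fun p : ℝ × ℝ => (‖g p.1 p.2‖₊ : ℝ≥0∞) from
      funext fun p => (Real.enorm_eq_ofReal_abs _).symm]
    exact h.ne
  obtain ⟨T, hT1, hTprop⟩ := key g hgm hfin hδ hε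
  refine ⟨T, fun t ht y hy => ?_⟩
  have h0t : (0 : ℝ) ≤ t := le_trans zero_le_one (le_trans hT1 ht)
  have heq : heatWaveInt f t y = heatWaveInt g t y := by
    unfold heatWaveInt
    rw [intervalIntegral.integral_of_le h0t, intervalIntegral.integral_of_le h0t]
    have hae2 : ∀ᵐ s ∂(volume.restrict (Set.Ioi (0:ℝ))), ∀ᵐ w ∂(volume : Measure ℝ),
        f s w = g s w := Measure.ae_ae_of_ae_prod hae
    have hae3 : ∀ᵐ s ∂(volume : Measure ℝ), s ∈ Set.Ioi (0:ℝ) →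
        (∀ᵐ w ∂(volume : Measure ℝ), f s w = g s w) :=
      (ae_restrict_iff' measurableSet_Ioi).1 hae2
    apply setIntegral_congr_ae measurableSet_Ioc
    filter_upwards [hae3] with s hs hsIoc
    have hsw : ∀ᵐ w ∂(volume : Measure ℝ), f s w = g s w := hs hsIoc.1
    refine integral_congr_ae (Filter.Eventually.of_forall fun z => ?_)
    refine integral_congr_ae (hsw.mono fun w hw => ?_)
    dsimp only
    rw [hw]
  rw [heq]
  exact hTprop t ht y hy
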